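/- arXiv:2409.10395 — 6 statements merged into one kernel-verified Lean document; each statement's English description precedes it below -/
import Mathlib

section
/- Let α ∈ (0,1] and let x* ∈ X be a leximin-optimal distribution, i.e., E(x*) ≽ E(x) for all x ∈ X. Then the α-downgrade of x* leximin-dominates all of X_{≤α}: E(down(x*)) ≽ E(x) for all x ∈ X_{≤α}. -/
open Finset

/-- The vector `v` sorted in non-decreasing order: `sortedVec v i` is the
`i`-th smallest entry of `v` (counting repetitions). -/
noncomputable def sortedVec {n : ℕ} (v : Fin n → ℝ) : Fin n → ℝ := v ∘ Tuple.sort v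

/-- The sum of the `k` smallest entries of `v`. -/
noncomputable def sumSmallest {n : ℕ} (v : Fin n → ℝ) (k : ℕ) : ℝ :=
  ∑ i ∈ Finset.univ.filter (fun i : Fin n => (i : ℕ) < k), sortedVec v i

/-- `v` is weakly leximin-preferred over `w`. -/
def LeximinPref {n : ℕ} (v w : Fin n → ℝ) : Prop :=
  sortedVec v = sortedVec w ∨
    ∃ k : Fin n, (∀ i, i < k → sortedVec v i = sortedVec w i) ∧ sortedVec w k < sortedVec v k

/-- `v` is strictly leximin-preferred over `w`. -/
def LeximinStrict {n : ℕ} (v w : Fin n → ℝ) : Prop :=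
  ∃ k : Fin n, (∀ i, i < k → sortedVec v i = sortedVec w i) ∧ sortedVec w k < sortedVec v k

/-- `x` is a probability distribution over the (finite) set of states `S`. -/
def IsDistribution {S : Type*} [Fintype S] (x : S → ℝ) : Prop :=
  (∀ s, 0 ≤ x s) ∧ ∑ s, x s = 1

/-- The expected utility of each agent under the (sub)distribution `x`. -/
noncomputable def expU {n : ℕ} {S : Type*} [Fintype S] (u : Fin n → S → ℝ) (x : S → ℝ) :
    Fin n → ℝ := fun i => ∑ s, x s * u i s

/-- Membership in `X_{≤α}`: a distribution that puts at most `α` total probability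
on the non-degenerate states. -/
def InXle {S : Type*} [Fintype S] [DecidableEq S] (α : ℝ) (sd : S) (x : S → ℝ) : Prop :=
  IsDistribution x ∧ ∑ j ∈ Finset.univ.erase sd, x j ≤ α

/-- The α-upgrade of a distribution `x` (w.r.t. the degenerate state `sd`). -/
noncomputable def upg {S : Type*} [Fintype S] [DecidableEq S] (α : ℝ) (sd : S) (x : S → ℝ) :
    S → ℝ :=
  fun s => if s = sd then 1 - (1 / α) * ∑ j ∈ Finset.univ.erase sd, x j else (1 / α) * x s

/-- The α-downgrade of a distribution `x` (w.r.t. the degenerate state `sd`). -/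
noncomputable def dng {S : Type*} [Fintype S] [DecidableEq S] (α : ℝ) (sd : S) (x : S → ℝ) :
    S → ℝ :=
  fun s => if s = sd then 1 - α * ∑ j ∈ Finset.univ.erase sd, x j else α * x s

open Finset

/-
Mass on the degenerate state contributes nothing to expected utility, so the α-upgrade of any
`x ∈ X_{≤α}` is a distribution whose utility vector is `E(x) / α`, while the α-downgrade
scales `E(x*)` by `α`. Leximin optimality of `x*` against the upgrade of `x` then survives
multiplication of both vectors by `α > 0`.
-/

lemma sortedVec_const_mul {n : ℕ} {c : ℝ} (hc : 0 ≤ c) (v : Fin n → ℝ) :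
    sortedVec (fun i => c * v i) = fun i => c * sortedVec v i := by
  have hmono : Monotone ((fun i => c * v i) ∘ Tuple.sort v) := fun a b hab =>
    mul_le_mul_of_nonneg_left (Tuple.monotone_sort v hab) hc
  exact ((Tuple.comp_sort_eq_comp_iff_monotone).mpr hmono).symm

lemma LeximinPref.const_mul {n : ℕ} {c : ℝ} (hc : 0 < c) {v w : Fin n → ℝ}
    (h : LeximinPref v w) : LeximinPref (fun i => c * v i) (fun i => c * w i) := by
  rw [LeximinPref, sortedVec_const_mul hc.le, sortedVec_const_mul hc.le]
  rcases h with h | ⟨k, hbefore, hk⟩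
  · exact Or.inl (by rw [h])
  · exact Or.inr ⟨k, fun i hi => congrArg (c * ·) (hbefore i hi), mul_lt_mul_of_pos_left hk hc⟩

section Degenerate

variable {n : ℕ} {S : Type*} [Fintype S] [DecidableEq S] {sd : S} {u : Fin n → S → ℝ}
  {α : ℝ}

lemma expU_dng (hud : ∀ i, u i sd = 0) (x : S → ℝ) :
    expU u (dng α sd x) = fun i => α * expU u x i := by
  funext i
  simp only [expU, Finset.mul_sum]
  refine Finset.sum_congr rfl fun s _ => ?_
  by_cases hs : s = sd
  · simp [dng, hs, hud i]
  · simp only [dng, if_neg hs]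
    ring

lemma expU_eq_const_mul_expU_upg (hα : α ≠ 0) (hud : ∀ i, u i sd = 0) (x : S → ℝ) :
    expU u x = fun i => α * expU u (upg α sd x) i := by
  funext i
  simp only [expU, Finset.mul_sum]
  refine Finset.sum_congr rfl fun s _ => ?_
  by_cases hs : s = sd
  · simp [upg, hs, hud i]
  · simp only [upg, if_neg hs]
    field_simp

lemma InXle.isDistribution_upg (hα : 0 < α) {x : S → ℝ} (hx : InXle α sd x) :
    IsDistribution (upg α sd x) := by
  obtain ⟨⟨hx_nonneg, -⟩, hx_mass⟩ := hx
  refine ⟨fun s => ?_, ?_⟩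
  · by_cases hs : s = sd
    · simp only [upg, hs, if_true]
      have : (1 / α) * ∑ j ∈ univ.erase sd, x j ≤ 1 := by
        rw [one_div_mul_eq_div, div_le_one hα]
        exact hx_mass
      linarith
    · simp only [upg, if_neg hs]
      exact mul_nonneg (by positivity) (hx_nonneg s)
  · rw [← Finset.add_sum_erase _ _ (mem_univ sd), Finset.sum_congr rfl fun j hj => by
      rw [upg, if_neg (Finset.ne_of_mem_erase hj)], ← Finset.mul_sum]
    simp only [upg, if_true]
    ring

end Degenerate

theorem stmt8_general {n : ℕ} {S : Type*} [Fintype S] [DecidableEq S]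
    (sd : S) (u : Fin n → S → ℝ) (hud : ∀ i, u i sd = 0)
    (α : ℝ) (hα0 : 0 < α)
    (xstar : S → ℝ)
    (hopt : ∀ x : S → ℝ, IsDistribution x →
      LeximinPref (expU u xstar) (expU u x)) :
    ∀ x : S → ℝ, InXle α sd x →
      LeximinPref (expU u (dng α sd xstar)) (expU u x) := by
  intro x hx
  rw [expU_dng hud, expU_eq_const_mul_expU_upg hα0.ne' hud x]
  exact (hopt _ (hx.isDistribution_upg hα0)).const_mul hα0

/-- the α-downgrade of a leximin-optimal distribution
leximin-dominates every element of `X_{≤α}`. -/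
theorem stmt8 {n : ℕ} (hn : 1 ≤ n) {S : Type*} [Fintype S] [DecidableEq S]
    (sd : S) (u : Fin n → S → ℝ) (hu : ∀ i s, 0 ≤ u i s) (hud : ∀ i, u i sd = 0)
    (α : ℝ) (hα0 : 0 < α) (hα1 : α ≤ 1)
    (xstar : S → ℝ) (hxstar : IsDistribution xstar)
    (hopt : ∀ x : S → ℝ, IsDistribution x →
      LeximinPref (expU u xstar) (expU u x)) :
    ∀ x : S → ℝ, InXle α sd x →
      LeximinPref (expU u (dng α sd xstar)) (expU u x) :=
  stmt8_general sd u hud α hα0 xstar hopt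
end

section
/- Let α ∈ (0,1], let z_1,…,z_n be reals, and let x^1,…,x^n ∈ X be distributions such that for every t ∈ {1,…,n}: (i) x^t is P1-feasible for t and z_1,…,z_{t−1}; (ii) z_t = obj_t(x^t); and (iii) obj_t(x^t) ≥ obj_t(x) for every x ∈ X_{≤α} that is P1-feasible for t and z_1,…,z_{t−1}. Then E(x^n) ≽ E(x) for all x ∈ X_{≤α}. (Consequently, if a leximin-optimal distribution exists, x^n is an α-leximin-approximation.) -/
open Finset

/-
Let `c ℓ = z₁ + ⋯ + z_ℓ`. The output `xs n` satisfies every constraint of the loop, so the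
sum of its `ℓ` smallest expected utilities is at least `c ℓ` for all `ℓ ≤ n`. If some
`x ∈ X_{≤α}` were strictly leximin-better, let `k` be the first sorted position where it
wins. Then `x` agrees with `xs n` on the first `k` sorted entries, hence is feasible for
step `k + 1`, and there its prefix sum strictly exceeds that of `xs n`, which is at
least `c (k + 1)`: this contradicts the optimality (iii) of `xs (k + 1)`, whose objective
is `z_{k+1}`.
-/

lemma sumSmallest_succ {n : ℕ} (v : Fin n → ℝ) (k : Fin n) :
    sumSmallest v (k + 1) = sumSmallest v k + sortedVec v k := by
  have hfilter : univ.filter (fun i : Fin n => (i : ℕ) < k + 1) =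
      insert k (univ.filter fun i : Fin n => (i : ℕ) < k) := by
    ext i
    simp only [mem_filter, mem_univ, true_and, mem_insert, Fin.ext_iff]
    omega
  rw [sumSmallest, hfilter, sum_insert (by simp), add_comm]
  rfl

lemma sumSmallest_congr {n : ℕ} {v w : Fin n → ℝ} {k : ℕ}
    (h : ∀ i : Fin n, (i : ℕ) < k → sortedVec v i = sortedVec w i) :
    sumSmallest v k = sumSmallest w k :=
  sum_congr rfl fun i hi => h i (mem_filter.mp hi).2

lemma leximinPref_or_leximinStrict {n : ℕ} (v w : Fin n → ℝ) :
    LeximinPref v w ∨ LeximinStrict w v := by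
  by_cases heq : sortedVec v = sortedVec w
  · exact Or.inl (Or.inl heq)
  obtain ⟨k, hk, hmin⟩ :=
    wellFounded_lt.has_min {i | sortedVec v i ≠ sortedVec w i} (Function.ne_iff.mp heq)
  have hagree : ∀ i, i < k → sortedVec v i = sortedVec w i :=
    fun i hi => not_not.mp fun hne => hmin i hne hi
  rcases lt_or_gt_of_ne hk with hlt | hgt
  · exact Or.inr ⟨k, fun i hi => (hagree i hi).symm, hlt⟩
  · exact Or.inl (Or.inr ⟨k, hagree, hgt⟩)

theorem leximinPref_of_sumSmallest_bounds {n : ℕ} (v w : Fin n → ℝ) (c : ℕ → ℝ)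
    (hv : ∀ ℓ, 1 ≤ ℓ → ℓ ≤ n → c ℓ ≤ sumSmallest v ℓ)
    (hw : ∀ t, 1 ≤ t → t ≤ n → (∀ ℓ, 1 ≤ ℓ → ℓ < t → c ℓ ≤ sumSmallest w ℓ) →
      sumSmallest w t ≤ c t) :
    LeximinPref v w := by
  refine (leximinPref_or_leximinStrict v w).resolve_right ?_
  rintro ⟨k, hagree, hlt⟩
  have hprefix : ∀ ℓ ≤ (k : ℕ), sumSmallest w ℓ = sumSmallest v ℓ := fun ℓ hℓ =>
    sumSmallest_congr fun i hi => hagree i (Fin.lt_def.mpr (by omega))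
  have hwk := hw (k + 1) (by omega) k.isLt fun ℓ h1 h2 =>
    (hprefix ℓ (by omega)).symm ▸ hv ℓ h1 (by omega)
  have hvk := hv (k + 1) (by omega) k.isLt
  rw [sumSmallest_succ] at hwk hvk
  linarith [hprefix k le_rfl]

lemma sum_Icc_eq_sum_Ico_add (z : ℕ → ℝ) {m : ℕ} (hm : 1 ≤ m) :
    ∑ i ∈ Icc 1 m, z i = ∑ i ∈ Ico 1 m, z i + z m := by
  rw [← Ico_add_one_right_eq_Icc, sum_Ico_succ_top hm]

theorem stmt10_general {n : ℕ} {S : Type*} [Fintype S] [DecidableEq S]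
    (sd : S) (u : Fin n → S → ℝ)
    (α : ℝ)
    (z : ℕ → ℝ) (xs : ℕ → S → ℝ)
    (hfeas : ∀ t, 1 ≤ t → t ≤ n → ∀ ℓ, 1 ≤ ℓ → ℓ < t →
      ∑ i ∈ Finset.Icc 1 ℓ, z i ≤ sumSmallest (expU u (xs t)) ℓ)
    (hz : ∀ t, 1 ≤ t → t ≤ n →
      z t = sumSmallest (expU u (xs t)) t - ∑ i ∈ Finset.Ico 1 t, z i)
    (hshallow : ∀ t, 1 ≤ t → t ≤ n → ∀ x : S → ℝ, InXle α sd x →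
      (∀ ℓ, 1 ≤ ℓ → ℓ < t → ∑ i ∈ Finset.Icc 1 ℓ, z i ≤ sumSmallest (expU u x) ℓ) →
      sumSmallest (expU u x) t - ∑ i ∈ Finset.Ico 1 t, z i ≤
        sumSmallest (expU u (xs t)) t - ∑ i ∈ Finset.Ico 1 t, z i) :
    ∀ x : S → ℝ, InXle α sd x → LeximinPref (expU u (xs n)) (expU u x) := by
  intro x hx
  refine leximinPref_of_sumSmallest_bounds _ _ (fun ℓ => ∑ i ∈ Icc 1 ℓ, z i) ?_ ?_
  · intro ℓ h1 h2
    rcases h2.lt_or_eq with hlt | rfl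
    · exact hfeas n (by omega) le_rfl ℓ h1 hlt
    · linarith [hz ℓ h1 le_rfl, sum_Icc_eq_sum_Ico_add z h1]
  · intro t h1 h2 hxfeas
    linarith [hshallow t h1 h2 x hx hxfeas, hz t h1 h2, sum_Icc_eq_sum_Ico_add z h1]

/-- if the main loop is run with an α-shallow solver (conditions
(i)-(iii)), then its output `xs n` leximin-dominates every element of `X_{≤α}`. -/
theorem stmt10 {n : ℕ} (hn : 1 ≤ n) {S : Type*} [Fintype S] [DecidableEq S]
    (sd : S) (u : Fin n → S → ℝ) (hu : ∀ i s, 0 ≤ u i s) (hud : ∀ i, u i sd = 0)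
    (α : ℝ) (hα0 : 0 < α) (hα1 : α ≤ 1)
    (z : ℕ → ℝ) (xs : ℕ → S → ℝ)
    (hdist : ∀ t, 1 ≤ t → t ≤ n → IsDistribution (xs t))
    (hfeas : ∀ t, 1 ≤ t → t ≤ n → ∀ ℓ, 1 ≤ ℓ → ℓ < t →
      ∑ i ∈ Finset.Icc 1 ℓ, z i ≤ sumSmallest (expU u (xs t)) ℓ)
    (hz : ∀ t, 1 ≤ t → t ≤ n →
      z t = sumSmallest (expU u (xs t)) t - ∑ i ∈ Finset.Ico 1 t, z i)
    (hshallow : ∀ t, 1 ≤ t → t ≤ n → ∀ x : S → ℝ, InXle α sd x →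
      (∀ ℓ, 1 ≤ ℓ → ℓ < t → ∑ i ∈ Finset.Icc 1 ℓ, z i ≤ sumSmallest (expU u x) ℓ) →
      sumSmallest (expU u x) t - ∑ i ∈ Finset.Ico 1 t, z i ≤
        sumSmallest (expU u (xs t)) t - ∑ i ∈ Finset.Ico 1 t, z i) :
    ∀ x : S → ℝ, InXle α sd x → LeximinPref (expU u (xs n)) (expU u x) :=
  stmt10_general sd u α z xs hfeas hz hshallow
end

section
/- Let c ≥ 0 be a nonnegative real, let v ∈ ℝ^n, and let k ∈ {1,…,n}. Then Σ_{i=1}^k v^↑_i ≥ c (the sum of the k smallest entries of v is at least c) if and only if there exist y ∈ ℝ and m ∈ ℝ^n such that: k·y − Σ_{i=1}^n m_i ≥ c; m_i ≥ y − v_i for all i ∈ {1,…,n}; and m_i ≥ 0 for all i ∈ {1,…,n}. -/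
/-!
This is LP duality for the `k` smallest entries. For every feasible `(y, m)`, pairing the
constraints `y - v i ≤ m i` with the `k` smallest entries and dropping the other `m i ≥ 0`
gives `k * y - ∑ m ≤ sumSmallest v k`. Conversely, taking `y` to be the `k`-th smallest
entry and `m i = max (y - v i) 0` attains the bound: `m` vanishes exactly off the `k`
smallest entries.
-/

open Finset

namespace SumSmallest

variable {n : ℕ} (v : Fin n → ℝ) {k : ℕ}

lemma sum_const_filter_val_lt (hkn : k ≤ n) (y : ℝ) :
    ∑ _i ∈ univ.filter (fun i : Fin n => (i : ℕ) < k), y = k * y := by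
  rw [sum_const, Fin.card_filter_val_lt, min_eq_right hkn, nsmul_eq_mul]

lemma sum_comp_sortedVec (f : ℝ → ℝ) : ∑ i, f (sortedVec v i) = ∑ i, f (v i) :=
  Equiv.sum_comp (Tuple.sort v) (fun i => f (v i))

lemma mul_sub_sum_le_sumSmallest (hkn : k ≤ n) {y : ℝ} {m : Fin n → ℝ}
    (hm : ∀ i, y - v i ≤ m i) (hm₀ : ∀ i, 0 ≤ m i) :
    k * y - ∑ i, m i ≤ sumSmallest v k := by
  set F := univ.filter (fun i : Fin n => (i : ℕ) < k)
  have hpair : ∑ i ∈ F, (y - sortedVec v i) ≤ ∑ i ∈ F, m (Tuple.sort v i) :=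
    sum_le_sum fun i _ => hm _
  have hdrop : ∑ i ∈ F, m (Tuple.sort v i) ≤ ∑ i, m i := by
    rw [← Equiv.sum_comp (Tuple.sort v) m]
    exact sum_le_sum_of_subset_of_nonneg (subset_univ F) fun i _ _ => hm₀ _
  rw [sum_sub_distrib, sum_const_filter_val_lt hkn] at hpair
  unfold sumSmallest
  linarith

lemma mul_sub_sum_max_eq_sumSmallest (hkn : k ≤ n) {y : ℝ}
    (hlow : ∀ i : Fin n, (i : ℕ) < k → sortedVec v i ≤ y)
    (hhigh : ∀ i : Fin n, k ≤ (i : ℕ) → y ≤ sortedVec v i) :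
    k * y - ∑ i, max (y - v i) 0 = sumSmallest v k := by
  have hsplit : ∑ i, max (y - sortedVec v i) 0 =
      ∑ i ∈ univ.filter (fun i : Fin n => (i : ℕ) < k), (y - sortedVec v i) := by
    rw [← sum_filter_add_sum_filter_not univ (fun i : Fin n => (i : ℕ) < k),
      sum_eq_zero (s := univ.filter _) fun i hi =>
        max_eq_right (sub_nonpos.2 (hhigh i (not_lt.1 (mem_filter.1 hi).2))), add_zero]
    exact sum_congr rfl fun i hi => max_eq_left (sub_nonneg.2 (hlow i (mem_filter.1 hi).2))
  rw [← sum_comp_sortedVec v (fun x => max (y - x) 0), hsplit, sum_sub_distrib,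
    sum_const_filter_val_lt hkn]
  unfold sumSmallest
  ring

end SumSmallest

open SumSmallest in
theorem stmt13_general {n : ℕ} (c : ℝ) (v : Fin n → ℝ)
    (k : ℕ) (hk1 : 1 ≤ k) (hkn : k ≤ n) :
    c ≤ sumSmallest v k ↔
      ∃ (y : ℝ) (m : Fin n → ℝ),
        c ≤ (k : ℝ) * y - ∑ i, m i ∧ (∀ i, y - v i ≤ m i) ∧ (∀ i, 0 ≤ m i) := by
  constructor
  · intro hc
    let y := sortedVec v ⟨k - 1, by omega⟩
    have hmono : Monotone (sortedVec v) := Tuple.monotone_sort v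
    have hval := mul_sub_sum_max_eq_sumSmallest v hkn (y := y)
      (fun i hi => hmono (Fin.le_def.2 (by dsimp only [y]; omega)))
      (fun i hi => hmono (Fin.le_def.2 (by dsimp only [y]; omega)))
    exact ⟨y, fun i => max (y - v i) 0, hval ▸ hc, fun i => le_max_left _ _,
      fun i => le_max_right _ _⟩
  · rintro ⟨y, m, hc, hm, hm₀⟩
    exact hc.trans (mul_sub_sum_le_sumSmallest v hkn hm hm₀)

/-- the sum of the `k` smallest entries of `v` is at least `c` iff
the auxiliary linear system with variables `y` and `m` is satisfiable. -/
theorem stmt13 {n : ℕ} (c : ℝ) (hc : 0 ≤ c) (v : Fin n → ℝ)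
    (k : ℕ) (hk1 : 1 ≤ k) (hkn : k ≤ n) :
    c ≤ sumSmallest v k ↔
      ∃ (y : ℝ) (m : Fin n → ℝ),
        c ≤ (k : ℝ) * y - ∑ i, m i ∧ (∀ i, y - v i ≤ m i) ∧ (∀ i, 0 ≤ m i) :=
  stmt13_general c v k hk1 hkn
end

section
/- Let t ∈ {1,…,n} and let z_1,…,z_t be reals. Suppose x^A ∈ ℝ^{|S|} satisfies x^A_j ≥ 0 for all j, Σ_{i=1}^ℓ E(x^A)^↑_i ≥ Σ_{i=1}^ℓ z_i for every ℓ ∈ {1,…,t}, and Σ_j x^A_j ≤ 1. Define x' by x'_j := x^A_j for j ≠ d and x'_d := 1 − Σ_{j≠d} x^A_j. Then x' ∈ X, x' is P1-feasible for t and z_1,…,z_{t−1}, and obj_t(x') ≥ z_t. -/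
open Finset

noncomputable def fillDegenerate {S : Type*} [Fintype S] [DecidableEq S] (sd : S) (x : S → ℝ) :
    S → ℝ :=
  fun s => if s = sd then 1 - ∑ j ∈ univ.erase sd, x j else x s

section FillDegenerate

variable {S : Type*} [Fintype S] [DecidableEq S] (sd : S) (x : S → ℝ)

theorem sum_fillDegenerate : ∑ s, fillDegenerate sd x s = 1 := by
  rw [← add_sum_erase _ _ (mem_univ sd)]
  have hoff : ∑ j ∈ univ.erase sd, fillDegenerate sd x j = ∑ j ∈ univ.erase sd, x j :=
    sum_congr rfl fun j hj => if_neg (ne_of_mem_erase hj)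
  rw [hoff]
  simp only [fillDegenerate, if_true, sub_add_cancel]

theorem isDistribution_fillDegenerate (hx : ∀ s, 0 ≤ x s) (hsum : ∑ s, x s ≤ 1) :
    IsDistribution (fillDegenerate sd x) := by
  refine ⟨fun s => ?_, sum_fillDegenerate sd x⟩
  by_cases hs : s = sd
  · have hle : ∑ j ∈ univ.erase sd, x j ≤ ∑ s, x s :=
      sum_le_sum_of_subset_of_nonneg (erase_subset _ _) fun i _ _ => hx i
    simp only [fillDegenerate, if_pos hs]
    linarith
  · simpa only [fillDegenerate, if_neg hs] using hx s

theorem expU_fillDegenerate {n : ℕ} (u : Fin n → S → ℝ) (hud : ∀ i, u i sd = 0) :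
    expU u (fillDegenerate sd x) = expU u x := by
  funext i
  refine sum_congr rfl fun s _ => ?_
  by_cases hs : s = sd
  · rw [hs, hud i, mul_zero, mul_zero]
  · simp only [fillDegenerate, if_neg hs]

end FillDegenerate

theorem stmt15_general {n : ℕ} {S : Type*} [Fintype S] [DecidableEq S]
    (sd : S) (u : Fin n → S → ℝ) (hud : ∀ i, u i sd = 0)
    (t : ℕ) (ht1 : 1 ≤ t) (z : ℕ → ℝ)
    (xA : S → ℝ) (hxA : ∀ s, 0 ≤ xA s)
    (hfeas : ∀ ℓ, 1 ≤ ℓ → ℓ ≤ t →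
      ∑ i ∈ Finset.Icc 1 ℓ, z i ≤ sumSmallest (expU u xA) ℓ)
    (hsum : ∑ s, xA s ≤ 1)
    (x' : S → ℝ)
    (hx' : x' = fun s => if s = sd then 1 - ∑ j ∈ Finset.univ.erase sd, xA j else xA s) :
    IsDistribution x' ∧
    (∀ ℓ, 1 ≤ ℓ → ℓ < t →
      ∑ i ∈ Finset.Icc 1 ℓ, z i ≤ sumSmallest (expU u x') ℓ) ∧
    z t ≤ sumSmallest (expU u x') t - ∑ i ∈ Finset.Ico 1 t, z i := by
  change x' = fillDegenerate sd xA at hx'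
  subst hx'
  rw [expU_fillDegenerate sd xA u hud]
  refine ⟨isDistribution_fillDegenerate sd xA hxA hsum,
    fun ℓ h1 h2 => hfeas ℓ h1 h2.le, ?_⟩
  have hsplit : ∑ i ∈ Icc 1 t, z i = ∑ i ∈ Ico 1 t, z i + z t := by
    rw [← sum_Ico_succ_top ht1, Ico_add_one_right_eq_Icc]
  linarith [hfeas t ht1 le_rfl]

/-- from a nonnegative P2-feasible vector with total mass at most 1,
filling the remaining mass into the degenerate state yields a P1-feasible
distribution whose objective value is at least `z t`. -/
theorem stmt15 {n : ℕ} (hn : 1 ≤ n) {S : Type*} [Fintype S] [DecidableEq S]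
    (sd : S) (u : Fin n → S → ℝ) (hu : ∀ i s, 0 ≤ u i s) (hud : ∀ i, u i sd = 0)
    (t : ℕ) (ht1 : 1 ≤ t) (htn : t ≤ n) (z : ℕ → ℝ)
    (xA : S → ℝ) (hxA : ∀ s, 0 ≤ xA s)
    (hfeas : ∀ ℓ, 1 ≤ ℓ → ℓ ≤ t →
      ∑ i ∈ Finset.Icc 1 ℓ, z i ≤ sumSmallest (expU u xA) ℓ)
    (hsum : ∑ s, xA s ≤ 1)
    (x' : S → ℝ)
    (hx' : x' = fun s => if s = sd then 1 - ∑ j ∈ Finset.univ.erase sd, xA j else xA s) :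
    IsDistribution x' ∧
    (∀ ℓ, 1 ≤ ℓ → ℓ < t →
      ∑ i ∈ Finset.Icc 1 ℓ, z i ≤ sumSmallest (expU u x') ℓ) ∧
    z t ≤ sumSmallest (expU u x') t - ∑ i ∈ Finset.Ico 1 t, z i :=
  stmt15_general sd u hud t ht1 z xA hxA hfeas hsum x' hx'
end

section
/- Let α ∈ (0,1], t ∈ {1,…,n}, and let z_1,…,z_t be reals. Suppose there exists x ∈ X_{≤α} that is P1-feasible for t and z_1,…,z_{t−1} and satisfies obj_t(x) ≥ z_t. Define x' by x'_j := x_j for j ≠ d and x'_d := 0. Then x' is nonnegative, satisfies Σ_{i=1}^ℓ E(x')^↑_i ≥ Σ_{i=1}^ℓ z_i for every ℓ ∈ {1,…,t}, and Σ_j x'_j ≤ α. In particular, the minimization program P2 (minimize Σ_j x_j over nonnegative vectors satisfying these sorted-sum constraints) has optimal value at most α. -/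
open Finset

theorem expU_ite_eq_of_utility_eq_zero {n : ℕ} {S : Type*} [Fintype S] [DecidableEq S]
    {u : Fin n → S → ℝ} {sd : S} (hud : ∀ i, u i sd = 0) (x : S → ℝ) :
    expU u (fun s => if s = sd then 0 else x s) = expU u x := by
  funext i
  refine sum_congr rfl fun s _ => ?_
  rcases eq_or_ne s sd with rfl | h
  · simp [hud i]
  · simp [h]

theorem sum_ite_eq_zero_eq_sum_erase {S M : Type*} [Fintype S] [DecidableEq S]
    [AddCommMonoid M] (x : S → M) (sd : S) :
    ∑ s, (if s = sd then 0 else x s) = ∑ s ∈ univ.erase sd, x s := by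
  simp_rw [← filter_ne', sum_filter, ite_not]

theorem sum_Icc_le_of_forall_lt_of_le_sub {M : Type*} [AddCommGroup M] [PartialOrder M]
    [IsOrderedAddMonoid M] {z f : ℕ → M} {t : ℕ}
    (hlt : ∀ ℓ, 1 ≤ ℓ → ℓ < t → ∑ i ∈ Icc 1 ℓ, z i ≤ f ℓ)
    (htop : z t ≤ f t - ∑ i ∈ Ico 1 t, z i) :
    ∀ ℓ, 1 ≤ ℓ → ℓ ≤ t → ∑ i ∈ Icc 1 ℓ, z i ≤ f ℓ := by
  intro ℓ hℓ1 hℓt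
  rcases hℓt.lt_or_eq with hℓt | rfl
  · exact hlt ℓ hℓ1 hℓt
  · rw [← sum_Ico_add_eq_sum_Icc hℓ1, add_comm, ← le_sub_iff_add_le]
    exact htop

theorem stmt16_general {n : ℕ} {S : Type*} [Fintype S] [DecidableEq S]
    (sd : S) (u : Fin n → S → ℝ) (hud : ∀ i, u i sd = 0)
    (α : ℝ)
    (t : ℕ) (z : ℕ → ℝ)
    (x : S → ℝ) (hxX : InXle α sd x)
    (hfeas : ∀ ℓ, 1 ≤ ℓ → ℓ < t →
      ∑ i ∈ Finset.Icc 1 ℓ, z i ≤ sumSmallest (expU u x) ℓ)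
    (hobj : z t ≤ sumSmallest (expU u x) t - ∑ i ∈ Finset.Ico 1 t, z i)
    (x' : S → ℝ) (hx' : x' = fun s => if s = sd then 0 else x s) :
    (∀ s, 0 ≤ x' s) ∧
    (∀ ℓ, 1 ≤ ℓ → ℓ ≤ t →
      ∑ i ∈ Finset.Icc 1 ℓ, z i ≤ sumSmallest (expU u x') ℓ) ∧
    ∑ s, x' s ≤ α := by
  subst hx'
  refine ⟨fun s => ?_, ?_, ?_⟩
  · dsimp only
    split_ifs
    exacts [le_rfl, hxX.1.1 s]
  · rw [expU_ite_eq_of_utility_eq_zero hud]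
    exact sum_Icc_le_of_forall_lt_of_le_sub hfeas hobj
  · rw [sum_ite_eq_zero_eq_sum_erase]
    exact hxX.2

/-- from a P1-feasible `x ∈ X_{≤α}` with objective value at least
`z t`, zeroing the degenerate state yields a nonnegative P2-feasible vector of
total mass at most `α`; in particular the optimal value of P2 is at most `α`. -/
theorem stmt16 {n : ℕ} (hn : 1 ≤ n) {S : Type*} [Fintype S] [DecidableEq S]
    (sd : S) (u : Fin n → S → ℝ) (hu : ∀ i s, 0 ≤ u i s) (hud : ∀ i, u i sd = 0)
    (α : ℝ) (hα0 : 0 < α) (hα1 : α ≤ 1)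
    (t : ℕ) (ht1 : 1 ≤ t) (htn : t ≤ n) (z : ℕ → ℝ)
    (x : S → ℝ) (hxX : InXle α sd x)
    (hfeas : ∀ ℓ, 1 ≤ ℓ → ℓ < t →
      ∑ i ∈ Finset.Icc 1 ℓ, z i ≤ sumSmallest (expU u x) ℓ)
    (hobj : z t ≤ sumSmallest (expU u x) t - ∑ i ∈ Finset.Ico 1 t, z i)
    (x' : S → ℝ) (hx' : x' = fun s => if s = sd then 0 else x s) :
    (∀ s, 0 ≤ x' s) ∧
    (∀ ℓ, 1 ≤ ℓ → ℓ ≤ t →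
      ∑ i ∈ Finset.Icc 1 ℓ, z i ≤ sumSmallest (expU u x') ℓ) ∧
    ∑ s, x' s ≤ α :=
  stmt16_general sd u hud α t z x hxX hfeas hobj x' hx'
end

section
/- Let α ∈ (0,1], let x* ∈ X be a leximin-optimal distribution, and let x' ∈ X satisfy the element-wise approximation condition E_i(x') ≥ α·E_i(x*) for every agent i ∈ {1,…,n}. Then x' is an α-leximin-approximation, i.e., E(x') ≽ α·E(x) for all x ∈ X. -/
open Finset

/-!
Leximin preference `v ≽ w` is the lexicographic order on the sorted vectors, so it is transitive,
it is implied by pointwise domination (sorting is monotone), and it is invariant under applying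
a strictly monotone map such as `t ↦ α * t` to every entry (sorting commutes with it). Hence
`E(x') ≽ α • E(x*) ≽ α • E(x)`, the first step by the element-wise approximation and the second
by optimality of `x*`.
-/

lemma leximinPref_iff_toLex_le {n : ℕ} {v w : Fin n → ℝ} :
    LeximinPref v w ↔ toLex (sortedVec w) ≤ toLex (sortedVec v) := by
  rw [LeximinPref, le_iff_eq_or_lt, toLex_inj]
  refine or_congr eq_comm (exists_congr fun k => and_congr_left' ?_)
  exact forall₂_congr fun i _ => eq_comm

lemma LeximinPref.trans {n : ℕ} {a b c : Fin n → ℝ}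
    (hab : LeximinPref a b) (hbc : LeximinPref b c) : LeximinPref a c :=
  leximinPref_iff_toLex_le.2 <|
    (leximinPref_iff_toLex_le.1 hbc).trans (leximinPref_iff_toLex_le.1 hab)

lemma sortedVec_le_iff {n : ℕ} (v : Fin n → ℝ) (a : ℝ) (j : Fin n) :
    sortedVec v j ≤ a ↔ (j : ℕ) < Fintype.card {i // v i ≤ a} := by
  have h := Tuple.lt_card_le_iff_apply_le_of_monotone (a := a) (j := j) (Tuple.monotone_sort v)
  rw [← Fintype.card_subtype] at h
  rw [← Fintype.card_congr ((Tuple.sort v).subtypeEquiv fun _ => Iff.rfl)]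
  exact h.symm

lemma sortedVec_le_sortedVec {n : ℕ} {v w : Fin n → ℝ} (h : ∀ i, v i ≤ w i) (j : Fin n) :
    sortedVec v j ≤ sortedVec w j := by
  rw [sortedVec_le_iff]
  exact ((sortedVec_le_iff w _ j).1 le_rfl).trans_le
    (Fintype.card_subtype_mono _ _ fun i hi => (h i).trans hi)

lemma leximinPref_of_le {n : ℕ} {v w : Fin n → ℝ} (h : ∀ i, w i ≤ v i) : LeximinPref v w :=
  leximinPref_iff_toLex_le.2 <| Pi.toLex_monotone (sortedVec_le_sortedVec h)

lemma sortedVec_comp {n : ℕ} (v : Fin n → ℝ) {f : ℝ → ℝ} (hf : Monotone f) :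
    sortedVec (f ∘ v) = f ∘ sortedVec v :=
  Tuple.unique_monotone (Tuple.monotone_sort _) (hf.comp (Tuple.monotone_sort v))

lemma toLex_comp_lt_toLex_comp {ι α β : Type*} [LT ι] [Preorder α] [Preorder β] {f : α → β}
    (hf : StrictMono f) {a b : ι → α} (h : toLex a < toLex b) : toLex (f ∘ a) < toLex (f ∘ b) :=
  let ⟨k, hbefore, hk⟩ := h
  ⟨k, fun i hi => congrArg f (hbefore i hi), hf hk⟩

lemma LeximinPref.comp {n : ℕ} {v w : Fin n → ℝ} {f : ℝ → ℝ} (hf : StrictMono f)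
    (h : LeximinPref v w) : LeximinPref (f ∘ v) (f ∘ w) := by
  rw [leximinPref_iff_toLex_le] at h ⊢
  rw [sortedVec_comp v hf.monotone, sortedVec_comp w hf.monotone]
  rcases h.lt_or_eq with hlt | heq
  · exact (toLex_comp_lt_toLex_comp hf hlt).le
  · rw [toLex_inj.1 heq]

theorem stmt18_general {n : ℕ} {S : Type*} [Fintype S]
    (u : Fin n → S → ℝ)
    (α : ℝ) (hα0 : 0 < α)
    (xstar : S → ℝ)
    (hopt : ∀ x : S → ℝ, IsDistribution x →
      LeximinPref (expU u xstar) (expU u x))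
    (x' : S → ℝ)
    (helem : ∀ i : Fin n, α * expU u xstar i ≤ expU u x' i) :
    ∀ x : S → ℝ, IsDistribution x →
      LeximinPref (expU u x') (fun i => α * expU u x i) := fun x hx =>
  (leximinPref_of_le helem).trans ((hopt x hx).comp (strictMono_mul_left_of_pos hα0))

/-- every element-wise α-approximation of a leximin-optimal
distribution is an α-leximin-approximation. -/
theorem stmt18 {n : ℕ} (hn : 1 ≤ n) {S : Type*} [Fintype S]
    (u : Fin n → S → ℝ) (hu : ∀ i s, 0 ≤ u i s)
    (α : ℝ) (hα0 : 0 < α) (hα1 : α ≤ 1)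
    (xstar : S → ℝ) (hxstar : IsDistribution xstar)
    (hopt : ∀ x : S → ℝ, IsDistribution x →
      LeximinPref (expU u xstar) (expU u x))
    (x' : S → ℝ) (hx'X : IsDistribution x')
    (helem : ∀ i : Fin n, α * expU u xstar i ≤ expU u x' i) :
    ∀ x : S → ℝ, IsDistribution x →
      LeximinPref (expU u x') (fun i => α * expU u x i) :=
  stmt18_general u α hα0 xstar hopt x' helem
end
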